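/- In a finite directed acyclic graph G, if there exists a directed path from node i to node j, then there exists a directed path P from i to j such that P is the unique directed path from i to j in the subgraph of G induced by the vertex set of P (an 'exclusive directed path'). -/

import Mathlib

/-- `P` is a directed path from `i` to `j` in the graph with edge relation `E`:
a sequence of distinct vertices starting at `i`, ending at `j`, with consecutive
vertices joined by edges. -/
def IsDiPath {V : Type*} (E : V → V → Prop) (i j : V) (P : List V) : Prop :=
  P.Chain' E ∧ P.head? = some i ∧ P.getLast? = some j ∧ P.Nodup

/-!
A shortest walk `P` from `i` to `j` is exclusive. It is a path because `E` is acyclic. A path `Q`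
from `i` to `j` in the subgraph induced by `P` has all its vertices in `P` and is no shorter than
`P`, so it is a permutation of `P`. Both lists are sorted by reachability, which is a strict order
in a DAG, hence `Q = P`.
-/

open Relation

section

variable {V : Type*} {E : V → V → Prop}

def IsDiWalk (E : V → V → Prop) (i j : V) (P : List V) : Prop :=
  P.IsChain E ∧ P.head? = some i ∧ P.getLast? = some j

lemma exists_isDiWalk_of_transGen {i j : V} (h : TransGen E i j) : ∃ P, IsDiWalk E i j P := by
  obtain ⟨P, hne, hchain, hhead, hlast⟩ :=
    List.exists_isChain_ne_nil_of_relationReflTransGen h.to_reflTransGen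
  exact ⟨P, hchain, hhead ▸ List.head?_eq_some_head hne, hlast ▸ List.getLast?_eq_some_getLast hne⟩

lemma exists_shortest_isDiWalk {i j : V} (h : TransGen E i j) :
    ∃ P, IsDiWalk E i j P ∧ ∀ Q, IsDiWalk E i j Q → P.length ≤ Q.length := by
  obtain ⟨P, hP, hmin⟩ :=
    (measure List.length).wf.has_min {P | IsDiWalk E i j P} (exists_isDiWalk_of_transGen h)
  exact ⟨P, hP, fun Q hQ => not_lt.1 (hmin Q hQ)⟩

lemma List.IsChain.pairwise_transGen {l : List V} (h : l.IsChain E) :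
    l.Pairwise (TransGen E) :=
  List.isChain_iff_pairwise.1 (h.imp fun _ _ => .single)

lemma List.IsChain.nodup_of_acyclic (hacyc : ∀ v, ¬ TransGen E v v) {l : List V}
    (h : l.IsChain E) : l.Nodup :=
  List.nodup_iff_pairwise_ne.2 <| h.pairwise_transGen.imp fun {a _} hab => by
    rintro rfl; exact hacyc a hab

lemma List.IsChain.subset_of_induced {S l : List V} {i : V}
    (h : l.IsChain fun a b => E a b ∧ a ∈ S ∧ b ∈ S) (hi : i ∈ S) (hhead : l.head? = some i) :
    l ⊆ S := by
  refine h.induction (· ∈ S) l (fun _ _ hab _ => hab.2.2) fun hne => ?_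
  rw [List.head?_eq_some_head hne, Option.some.injEq] at hhead
  exact hhead ▸ hi

lemma IsDiWalk.eq_of_isDiPath_induced (hacyc : ∀ v, ¬ TransGen E v v) {i j : V} {P Q : List V}
    (hP : IsDiWalk E i j P) (hmin : ∀ Q, IsDiWalk E i j Q → P.length ≤ Q.length)
    (hQ : IsDiPath (fun a b => E a b ∧ a ∈ P ∧ b ∈ P) i j Q) : Q = P := by
  obtain ⟨hQchain, hQhead, hQlast, hQnodup⟩ := hQ
  have hQwalk : IsDiWalk E i j Q := ⟨hQchain.imp fun _ _ hab => hab.1, hQhead, hQlast⟩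
  have hsub : Q ⊆ P := hQchain.subset_of_induced (List.mem_of_mem_head? hP.2.1) hQhead
  have hperm : Q.Perm P := (hQnodup.subperm hsub).perm_of_length_le (hmin Q hQwalk)
  exact hperm.eq_of_pairwise (fun a _ _ _ hab hba => (hacyc a (hab.trans hba)).elim)
    hQwalk.1.pairwise_transGen hP.1.pairwise_transGen

end

theorem exists_exclusive_directed_path_general {V : Type*}
    (E : V → V → Prop) (hacyc : ∀ v, ¬ Relation.TransGen E v v)
    (i j : V) (h : Relation.TransGen E i j) :
    ∃ P : List V, IsDiPath E i j P ∧
      ∀ Q : List V, IsDiPath (fun a b => E a b ∧ a ∈ P ∧ b ∈ P) i j Q → Q = P := by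
  obtain ⟨P, hP, hmin⟩ := exists_shortest_isDiWalk h
  exact ⟨P, ⟨hP.1, hP.2.1, hP.2.2, hP.1.nodup_of_acyclic hacyc⟩,
    fun Q hQ => hP.eq_of_isDiPath_induced hacyc hmin hQ⟩

/-- In a finite DAG, if there is a directed path from `i` to `j`, then there is
an *exclusive* directed path `P` from `i` to `j`: a path that is the unique directed path
from `i` to `j` in the subgraph induced by the vertices of `P`. -/
theorem exists_exclusive_directed_path {V : Type*} [Fintype V]
    (E : V → V → Prop) (hacyc : ∀ v, ¬ Relation.TransGen E v v)
    (i j : V) (h : Relation.TransGen E i j) :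
    ∃ P : List V, IsDiPath E i j P ∧
      ∀ Q : List V, IsDiPath (fun a b => E a b ∧ a ∈ P ∧ b ∈ P) i j Q → Q = P :=
  exists_exclusive_directed_path_general E hacyc i j h
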